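/- Let μ > 0, A, B, D₁, D_i > 0, ω > 0. Define F(τ) = (μ − ω√(B + D₁/τ²)) / √(A + D_i/τ²). Then F is strictly increasing in τ on (0, ∞) whenever μ − ω√(B + D₁/τ²) ≥ 0, and hence Q(F(τ)) is decreasing in τ. -/

import Mathlib

/-- The Gaussian tail function. -/
noncomputable def Qfun (x : ℝ) : ℝ :=
  (Real.sqrt (2 * Real.pi))⁻¹ * ∫ u in Set.Ioi x, Real.exp (-u ^ 2 / 2)

open MeasureTheory Set

theorem integral_Ioi_strictAnti {f : ℝ → ℝ} (hf : Integrable f) (hpos : ∀ x, 0 < f x) :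
    StrictAnti fun x => ∫ u in Ioi x, f u := by
  intro x y hxy
  rw [← sub_pos, intervalIntegral.integral_Ioi_sub_Ioi hf.integrableOn hxy.le]
  exact intervalIntegral.intervalIntegral_pos_of_pos_on hf.intervalIntegrable
    (fun u _ => hpos u) hxy

theorem integrable_exp_neg_sq_div_two : Integrable fun u : ℝ => Real.exp (-u ^ 2 / 2) := by
  convert integrable_exp_neg_mul_sq (b := (1 / 2 : ℝ)) (by norm_num) using 2 with u
  ring_nf

theorem Qfun_strictAnti : StrictAnti Qfun :=
  (integral_Ioi_strictAnti integrable_exp_neg_sq_div_two fun _ => Real.exp_pos _).const_mul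
    (by positivity)

theorem sqrt_add_div_sq_strictAntiOn {a d : ℝ} (ha : 0 ≤ a) (hd : 0 < d) :
    StrictAntiOn (fun τ : ℝ => √(a + d / τ ^ 2)) (Ioi 0) := by
  intro τ₁ (hτ₁ : 0 < τ₁) τ₂ _ hτ
  refine Real.sqrt_lt_sqrt (by positivity) ?_
  gcongr

theorem miss_rate_decreases_with_time_step_general
    (μ A B D1 Di ω : ℝ) (hA : 0 < A) (hB : 0 < B)
    (hD1 : 0 < D1) (hDi : 0 < Di) (hω : 0 < ω)
    (F : ℝ → ℝ)
    (hF : F = fun τ => (μ - ω * Real.sqrt (B + D1 / τ ^ 2)) / Real.sqrt (A + Di / τ ^ 2)) :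
    ∀ τ1 τ2 : ℝ, 0 < τ1 → τ1 < τ2 →
      0 ≤ μ - ω * Real.sqrt (B + D1 / τ1 ^ 2) →
      F τ1 < F τ2 ∧ Qfun (F τ2) < Qfun (F τ1) := by
  intro τ1 τ2 h1 h12 hnum
  have h2 : 0 < τ2 := h1.trans h12
  have hnum_lt : μ - ω * √(B + D1 / τ1 ^ 2) < μ - ω * √(B + D1 / τ2 ^ 2) := by
    have := sqrt_add_div_sq_strictAntiOn hB.le hD1 h1 h2 h12
    gcongr
  have hden_le : √(A + Di / τ2 ^ 2) ≤ √(A + Di / τ1 ^ 2) :=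
    (sqrt_add_div_sq_strictAntiOn hA.le hDi h1 h2 h12).le
  have hF12 : F τ1 < F τ2 := by
    subst hF
    exact div_lt_div₀ hnum_lt hden_le (hnum.trans hnum_lt.le) (by positivity)
  exact ⟨hF12, Qfun_strictAnti hF12⟩

/-- With `F(τ) = (μ − ω√(B + D₁/τ²)) / √(A + D_i/τ²)`, `F` is strictly increasing on
`(0, ∞)` wherever the numerator is nonnegative, and hence the miss rate `Q(F(τ))`
decreases with `τ`. -/
theorem miss_rate_decreases_with_time_step
    (μ A B D1 Di ω : ℝ) (hμ : 0 < μ) (hA : 0 < A) (hB : 0 < B)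
    (hD1 : 0 < D1) (hDi : 0 < Di) (hω : 0 < ω)
    (F : ℝ → ℝ)
    (hF : F = fun τ => (μ - ω * Real.sqrt (B + D1 / τ ^ 2)) / Real.sqrt (A + Di / τ ^ 2)) :
    ∀ τ1 τ2 : ℝ, 0 < τ1 → τ1 < τ2 →
      0 ≤ μ - ω * Real.sqrt (B + D1 / τ1 ^ 2) →
      F τ1 < F τ2 ∧ Qfun (F τ2) < Qfun (F τ1) :=
  miss_rate_decreases_with_time_step_general μ A B D1 Di ω hA hB hD1 hDi hω F hF
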